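/- arXiv:1903.04012 — 11 statements merged into one kernel-verified Lean document; each statement's English description precedes it below -/
import Mathlib

section
/- Let C be a concept class over instance space X and T a teacher mapping on C. Then T is non-clashing on C if and only if there exists a learner mapping L from sets of labelled examples to concepts in C such that (T,L) is both successful and collusion-free on C. -/
open Finset

variable {X : Type*} [DecidableEq X]

/-- A sample set `S` is consistent with concept `C`. -/
def Consistent (C : Finset X) (S : Finset (X × Bool)) : Prop :=
  ∀ p ∈ S, (p.1 ∈ C ↔ p.2 = true)

/-- `T` is a teacher mapping for the class `𝒞`. -/
def IsTeacher (𝒞 : Finset (Finset X)) (T : Finset X → Finset (X × Bool)) : Prop :=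
  ∀ C ∈ 𝒞, Consistent C (T C)

/-- `T` is non-clashing on `𝒞`. -/
def NonClashing (𝒞 : Finset (Finset X)) (T : Finset X → Finset (X × Bool)) : Prop :=
  ∀ C ∈ 𝒞, ∀ C' ∈ 𝒞, C ≠ C' → ¬ (Consistent C' (T C) ∧ Consistent C (T C'))

/-- The no-clash teaching dimension. -/
noncomputable def NCTD (𝒞 : Finset (Finset X)) : ℕ :=
  sInf {d | ∃ T : Finset X → Finset (X × Bool),
    IsTeacher 𝒞 T ∧ NonClashing 𝒞 T ∧ ∀ C ∈ 𝒞, (T C).card ≤ d}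

/-- `T` is a positive teacher mapping for `𝒞` (positive examples only). -/
def IsPosTeacher (𝒞 : Finset (Finset X)) (T : Finset X → Finset X) : Prop :=
  ∀ C ∈ 𝒞, T C ⊆ C

/-- A positive teacher mapping is non-clashing on `𝒞`. -/
def PosNonClashing (𝒞 : Finset (Finset X)) (T : Finset X → Finset X) : Prop :=
  ∀ C ∈ 𝒞, ∀ C' ∈ 𝒞, C ≠ C' → ¬ (T C ⊆ C' ∧ T C' ⊆ C)

/-- The positive no-clash teaching dimension. -/
noncomputable def NCTDplus (𝒞 : Finset (Finset X)) : ℕ :=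
  sInf {d | ∃ T : Finset X → Finset X,
    IsPosTeacher 𝒞 T ∧ PosNonClashing 𝒞 T ∧ ∀ C ∈ 𝒞, (T C).card ≤ d}

/-- The average no-clash teaching dimension (real-valued). -/
noncomputable def ANCTD (𝒞 : Finset (Finset X)) : ℝ :=
  sInf {q : ℝ | ∃ T : Finset X → Finset (X × Bool),
    IsTeacher 𝒞 T ∧ NonClashing 𝒞 T ∧
      q = (∑ C ∈ 𝒞, ((T C).card : ℝ)) / 𝒞.card}

/-- The number of neighbors of `C` in `𝒞` (concepts at symmetric difference one). -/
def degIn (𝒞 : Finset (Finset X)) (C : Finset X) : ℕ :=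
  (𝒞.filter (fun C' => ((C \ C') ∪ (C' \ C)).card = 1)).card

/-- The average degree of `𝒞`. -/
noncomputable def degAvg (𝒞 : Finset (Finset X)) : ℝ :=
  (∑ C ∈ 𝒞, (degIn 𝒞 C : ℝ)) / 𝒞.card

/-- `T` is non-clashing iff there is a learner `L` (into `𝒞`) making
`(T, L)` successful and collusion-free on `𝒞`. -/
theorem nonClashing_iff_exists_learner {X : Type*} [DecidableEq X]
    (𝒞 : Finset (Finset X)) (h𝒞 : 𝒞.Nonempty)
    (T : Finset X → Finset (X × Bool)) (hT : IsTeacher 𝒞 T) :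
    NonClashing 𝒞 T ↔
      ∃ L : Finset (X × Bool) → Finset X,
        (∀ S, L S ∈ 𝒞) ∧
        (∀ C ∈ 𝒞, L (T C) = C) ∧
        (∀ C ∈ 𝒞, ∀ S : Finset (X × Bool),
          Consistent C S → T C ⊆ S → L S = L (T C)) := by
  classical
  constructor
  · intro hNC
    -- uniqueness of a candidate concept for a sample
    have uniq : ∀ S : Finset (X × Bool), ∀ C ∈ 𝒞, ∀ C' ∈ 𝒞,
        Consistent C S → T C ⊆ S → Consistent C' S → T C' ⊆ S → C = C' := by
      intro S C hC C' hC' hcons hsub hcons' hsub'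
      by_contra hne
      exact hNC C hC C' hC' hne
        ⟨fun p hp => hcons' p (hsub hp), fun p hp => hcons p (hsub' hp)⟩
    set L : Finset (X × Bool) → Finset X := fun S =>
      if h : ∃ C ∈ 𝒞, Consistent C S ∧ T C ⊆ S then h.choose else h𝒞.choose with hL
    have hmem : ∀ S, L S ∈ 𝒞 := by
      intro S
      simp only [hL]
      split
      · next h => exact h.choose_spec.1
      · exact h𝒞.choose_spec
    have key : ∀ S : Finset (X × Bool), ∀ C ∈ 𝒞, Consistent C S → T C ⊆ S → L S = C := by
      intro S C hC hcons hsub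
      have h : ∃ C ∈ 𝒞, Consistent C S ∧ T C ⊆ S := ⟨C, hC, hcons, hsub⟩
      simp only [hL, dif_pos h]
      exact uniq S h.choose h.choose_spec.1 C hC h.choose_spec.2.1 h.choose_spec.2.2 hcons hsub
    refine ⟨L, hmem, fun C hC => key (T C) C hC (hT C hC) (subset_refl _), ?_⟩
    intro C hC S hcons hsub
    rw [key S C hC hcons hsub, key (T C) C hC (hT C hC) (subset_refl _)]
  · rintro ⟨L, hLmem, hLsucc, hLcf⟩ C hC C' hC' hne ⟨h1, h2⟩
    set S := T C ∪ T C' with hS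
    have hconsC : Consistent C S := by
      intro p hp
      rcases Finset.mem_union.mp hp with h | h
      · exact hT C hC p h
      · exact h2 p h
    have hconsC' : Consistent C' S := by
      intro p hp
      rcases Finset.mem_union.mp hp with h | h
      · exact h1 p h
      · exact hT C' hC' p h
    have e1 : L S = C := by
      rw [hLcf C hC S hconsC Finset.subset_union_left, hLsucc C hC]
    have e2 : L S = C' := by
      rw [hLcf C' hC' S hconsC' Finset.subset_union_right, hLsucc C' hC']
    exact hne (e1 ▸ e2)
end

section
/- If T is a positive non-clashing teacher mapping for a concept class C over a finite domain, then there exists a positive non-clashing teacher mapping T' for C such that |T'(C)| = min{|C|, ord(T,C)} for all C ∈ C. -/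
open Finset

variable {X : Type*} [DecidableEq X]

/-- normal form for positive non-clashing teacher mappings. -/
theorem exists_normalForm_posTeacher {X : Type*} [DecidableEq X] [Fintype X]
    (𝒞 : Finset (Finset X)) (T : Finset X → Finset X)
    (hT : IsPosTeacher 𝒞 T) (hNC : PosNonClashing 𝒞 T) :
    ∃ T' : Finset X → Finset X,
      IsPosTeacher 𝒞 T' ∧ PosNonClashing 𝒞 T' ∧
        ∀ C ∈ 𝒞, (T' C).card = min C.card (𝒞.sup (fun D => (T D).card)) := by
  classical
  have key : ∀ C ∈ 𝒞, ∃ u, T C ⊆ u ∧ u ⊆ C ∧ u.card = min C.card (𝒞.sup (fun D => (T D).card)) :=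
    fun C hC => Finset.exists_subsuperset_card_eq (hT C hC)
      (le_min (Finset.card_le_card (hT C hC)) (Finset.le_sup (f := fun D => (T D).card) hC)) (min_le_left _ _)
  choose! u hu1 hu2 hu3 using key
  refine ⟨u, fun C hC => hu2 C hC, ?_, fun C hC => hu3 C hC⟩
  rintro C hC C' hC' hne ⟨h1, h2⟩
  exact hNC C hC C' hC' hne ⟨(hu1 C hC).trans h1, (hu1 C' hC').trans h2⟩
end

section
/- Let C be a finite concept class over a finite domain with NCTD(C) = d, and let X(C) be the minimum number of distinct instances used by any non-clashing teacher mapping of order d for C. Then |C| ≤ 2^d · binomial(X(C), d). -/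
open Finset

variable {X : Type*} [DecidableEq X]

/-- The set of instances used by teacher mapping `T` on `𝒞`. -/
def usedInstances (𝒞 : Finset (Finset X)) (T : Finset X → Finset (X × Bool)) :
    Finset X :=
  𝒞.biUnion (fun C => (T C).image Prod.fst)

/-- `X(𝒞)`: the minimum number of instances used by an optimal
non-clashing teacher mapping for `𝒞`. -/
noncomputable def XC (𝒞 : Finset (Finset X)) : ℕ :=
  sInf {n | ∃ T : Finset X → Finset (X × Bool),
    IsTeacher 𝒞 T ∧ NonClashing 𝒞 T ∧
      (∀ C ∈ 𝒞, (T C).card ≤ NCTD 𝒞) ∧ (usedInstances 𝒞 T).card = n}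

/-! Take an optimal teacher `T` whose teaching sets mention only `X(𝒞)` instances, forming `U`.
Non-clashing means that two concepts agreeing on the instances of both teaching sets coincide.
Labelling all of `U` is therefore itself a non-clashing teacher, so `d ≤ |U|`, and we may pad the
instances of each `T C` to a `d`-subset `S ⊆ U`; the concept is then determined by `(S, C ∩ S)`,
which leaves at most `2^d · (|U| choose d)` possibilities. -/

def labelOn (V C : Finset X) : Finset (X × Bool) :=
  V.image fun x => (x, decide (x ∈ C))

lemma card_labelOn_le (V C : Finset X) : (labelOn V C).card ≤ V.card :=
  card_image_le

lemma consistent_labelOn_iff {V C C' : Finset X} :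
    Consistent C' (labelOn V C) ↔ C' ∩ V = C ∩ V := by
  simp only [Consistent, labelOn, forall_mem_image, decide_eq_true_eq, Finset.ext_iff, mem_inter]
  exact ⟨fun h x => and_congr_left (h ·), fun h x hx => by simpa [hx] using h x⟩

lemma isTeacher_labelOn (𝒞 : Finset (Finset X)) (V : Finset X) : IsTeacher 𝒞 (labelOn V) :=
  fun _ _ => consistent_labelOn_iff.2 rfl

lemma nonClashing_labelOn {𝒞 : Finset (Finset X)} {V : Finset X}
    (hV : Set.InjOn (· ∩ V) 𝒞) : NonClashing 𝒞 (labelOn V) :=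
  fun _ hC _ hC' hne h => hne <| hV hC hC' (consistent_labelOn_iff.1 h.2)

lemma injOn_inter_sup (𝒞 : Finset (Finset X)) : Set.InjOn (· ∩ 𝒞.sup id) 𝒞 := by
  have hsup : ∀ C ∈ 𝒞, C ∩ 𝒞.sup id = C := fun C hC => inter_eq_left.2 (le_sup (f := id) hC)
  exact fun C hC C' hC' h => (hsup C hC).symm.trans (h.trans (hsup C' hC'))

lemma NCTD_le_card_of_injOn_inter {𝒞 : Finset (Finset X)} {V : Finset X}
    (hV : Set.InjOn (· ∩ V) 𝒞) : NCTD 𝒞 ≤ V.card :=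
  Nat.sInf_le (show V.card ∈ _ from ⟨labelOn V, isTeacher_labelOn 𝒞 V, nonClashing_labelOn hV,
    fun C _ => card_labelOn_le V C⟩)

lemma exists_teacher_card_le_NCTD (𝒞 : Finset (Finset X)) :
    ∃ T, IsTeacher 𝒞 T ∧ NonClashing 𝒞 T ∧ ∀ C ∈ 𝒞, (T C).card ≤ NCTD 𝒞 :=
  Nat.sInf_mem (s := {d | ∃ T, IsTeacher 𝒞 T ∧ NonClashing 𝒞 T ∧ ∀ C ∈ 𝒞, (T C).card ≤ d})
    ⟨_, labelOn (𝒞.sup id), isTeacher_labelOn 𝒞 _,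
      nonClashing_labelOn (injOn_inter_sup 𝒞), fun C _ => card_labelOn_le _ C⟩

lemma exists_teacher_card_usedInstances_eq_XC (𝒞 : Finset (Finset X)) :
    ∃ T, IsTeacher 𝒞 T ∧ NonClashing 𝒞 T ∧ (∀ C ∈ 𝒞, (T C).card ≤ NCTD 𝒞) ∧
      (usedInstances 𝒞 T).card = XC 𝒞 := by
  obtain ⟨T, hT, hNC, hord⟩ := exists_teacher_card_le_NCTD 𝒞
  exact Nat.sInf_mem (s := {n | ∃ T, IsTeacher 𝒞 T ∧ NonClashing 𝒞 T ∧
    (∀ C ∈ 𝒞, (T C).card ≤ NCTD 𝒞) ∧ (usedInstances 𝒞 T).card = n}) ⟨_, T, hT, hNC, hord, rfl⟩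

lemma Consistent.of_inter_eq {C C' V : Finset X} {S : Finset (X × Bool)} (h : Consistent C S)
    (hS : S.image Prod.fst ⊆ V) (hCV : C ∩ V = C' ∩ V) : Consistent C' S := by
  intro p hp
  have hpV : p.1 ∈ V := hS (mem_image_of_mem _ hp)
  rw [← h p hp]
  simpa only [mem_inter, hpV, and_true] using (Finset.ext_iff.1 hCV p.1).symm

section NonClashing

variable {𝒞 : Finset (Finset X)} {T : Finset X → Finset (X × Bool)}

lemma NonClashing.eq_of_inter_eq (hT : IsTeacher 𝒞 T) (hNC : NonClashing 𝒞 T)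
    {C C' : Finset X} (hC : C ∈ 𝒞) (hC' : C' ∈ 𝒞) {V : Finset X}
    (hV : (T C).image Prod.fst ⊆ V) (hV' : (T C').image Prod.fst ⊆ V)
    (h : C ∩ V = C' ∩ V) : C = C' := by
  by_contra hne
  exact hNC C hC C' hC' hne ⟨(hT C hC).of_inter_eq hV h, (hT C' hC').of_inter_eq hV' h.symm⟩

lemma image_fst_subset_usedInstances {C : Finset X} (hC : C ∈ 𝒞) :
    (T C).image Prod.fst ⊆ usedInstances 𝒞 T :=
  subset_biUnion_of_mem (fun C => (T C).image Prod.fst) hC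

lemma NonClashing.injOn_inter_usedInstances (hT : IsTeacher 𝒞 T) (hNC : NonClashing 𝒞 T) :
    Set.InjOn (· ∩ usedInstances 𝒞 T) 𝒞 := fun _ hC _ hC' =>
  hNC.eq_of_inter_eq hT hC hC' (image_fst_subset_usedInstances hC)
    (image_fst_subset_usedInstances hC')

lemma card_sigma_powersetCard_powerset {α : Type*} (U : Finset α) (d : ℕ) :
    ((U.powersetCard d).sigma fun S => S.powerset).card = 2 ^ d * U.card.choose d := by
  rw [card_sigma, sum_congr rfl fun S hS => by rw [card_powerset, (mem_powersetCard.1 hS).2],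
    sum_const, card_powersetCard, smul_eq_mul, mul_comm]

lemma NonClashing.card_le_two_pow_mul_choose (hT : IsTeacher 𝒞 T) (hNC : NonClashing 𝒞 T)
    {d : ℕ} (hord : ∀ C ∈ 𝒞, (T C).card ≤ d) (hd : d ≤ (usedInstances 𝒞 T).card) :
    𝒞.card ≤ 2 ^ d * (usedInstances 𝒞 T).card.choose d := by
  have hpad : ∀ C ∈ 𝒞, ∃ S, (T C).image Prod.fst ⊆ S ∧ S ⊆ usedInstances 𝒞 T ∧ S.card = d :=
    fun C hC => exists_subsuperset_card_eq (image_fst_subset_usedInstances hC)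
      (card_image_le.trans (hord C hC)) hd
  choose! pad hTpad hpadU hpad_card using hpad
  rw [← card_sigma_powersetCard_powerset]
  refine card_le_card_of_injOn (fun C => (⟨pad C, C ∩ pad C⟩ : Σ _ : Finset X, Finset X))
    (fun C hC => ?_) fun C hC C' hC' h => ?_
  · simp only [mem_coe, mem_sigma, mem_powersetCard, mem_powerset]
    exact ⟨⟨hpadU C hC, hpad_card C hC⟩, inter_subset_right⟩
  · obtain ⟨hpad_eq, hinter⟩ := Sigma.mk.inj_iff.1 h
    refine hNC.eq_of_inter_eq hT hC hC' (hTpad C hC) (hpad_eq ▸ hTpad C' hC') ?_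
    rw [eq_of_heq hinter, hpad_eq]

end NonClashing

theorem card_le_of_NCTD_general {X : Type*} [DecidableEq X]
    (𝒞 : Finset (Finset X)) (d : ℕ) (hd : NCTD 𝒞 = d) :
    𝒞.card ≤ 2 ^ d * (XC 𝒞).choose d := by
  obtain ⟨T, hT, hNC, hord, hXC⟩ := exists_teacher_card_usedInstances_eq_XC 𝒞
  subst hd
  rw [← hXC]
  exact hNC.card_le_two_pow_mul_choose hT hord
    (NCTD_le_card_of_injOn_inter (hNC.injOn_inter_usedInstances hT))

/-- if `NCTD(𝒞) = d` then `|𝒞| ≤ 2^d * (X(𝒞) choose d)`. -/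
theorem card_le_of_NCTD {X : Type*} [DecidableEq X] [Fintype X]
    (𝒞 : Finset (Finset X)) (d : ℕ) (hd : NCTD 𝒞 = d) :
    𝒞.card ≤ 2 ^ d * (XC 𝒞).choose d :=
  card_le_of_NCTD_general 𝒞 d hd
end

section
/- Let C be a finite concept class with NCTD⁺(C) = d, and let X⁺(C) be the minimum number of distinct instances used by any positive non-clashing teacher mapping of order d for C. Then |C| ≤ Σ_{i=0}^{d} binomial(X⁺(C), i). -/
open Finset

variable {X : Type*} [DecidableEq X]

/-- `X⁺(𝒞)`: the minimum number of instances used by an optimal positive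
non-clashing teacher mapping for `𝒞`. -/
noncomputable def XCplus (𝒞 : Finset (Finset X)) : ℕ :=
  sInf {n | ∃ T : Finset X → Finset X,
    IsPosTeacher 𝒞 T ∧ PosNonClashing 𝒞 T ∧
      (∀ C ∈ 𝒞, (T C).card ≤ NCTDplus 𝒞) ∧ (𝒞.biUnion T).card = n}

set_option linter.unusedSectionVars false in
lemma NCTDplus_set_nonempty (𝒞 : Finset (Finset X)) [Fintype X] :
    {d | ∃ T : Finset X → Finset X,
      IsPosTeacher 𝒞 T ∧ PosNonClashing 𝒞 T ∧ ∀ C ∈ 𝒞, (T C).card ≤ d}.Nonempty := by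
  refine ⟨Fintype.card X, id, ?_, ?_, ?_⟩
  · intro C hC; exact subset_rfl
  · intro C hC C' hC' hne ⟨h1, h2⟩
    exact hne (le_antisymm h1 h2)
  · intro C hC; exact Finset.card_le_univ C

/-- if `NCTD⁺(𝒞) = d` then `|𝒞| ≤ ∑_{i=0}^d (X⁺(𝒞) choose i)`. -/
theorem card_le_of_NCTDplus {X : Type*} [DecidableEq X] [Fintype X]
    (𝒞 : Finset (Finset X)) (d : ℕ) (hd : NCTDplus 𝒞 = d) :
    𝒞.card ≤ ∑ i ∈ Finset.range (d + 1), (XCplus 𝒞).choose i := by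
  -- Get an optimal teacher from NCTDplus
  have h1 : NCTDplus 𝒞 ∈ {d | ∃ T : Finset X → Finset X,
      IsPosTeacher 𝒞 T ∧ PosNonClashing 𝒞 T ∧ ∀ C ∈ 𝒞, (T C).card ≤ d} :=
    Nat.sInf_mem (NCTDplus_set_nonempty 𝒞)
  obtain ⟨T₀, hT₀1, hT₀2, hT₀3⟩ := h1
  have h2 : XCplus 𝒞 ∈ {n | ∃ T : Finset X → Finset X,
      IsPosTeacher 𝒞 T ∧ PosNonClashing 𝒞 T ∧
        (∀ C ∈ 𝒞, (T C).card ≤ NCTDplus 𝒞) ∧ (𝒞.biUnion T).card = n} :=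
    Nat.sInf_mem ⟨(𝒞.biUnion T₀).card, T₀, hT₀1, hT₀2, hT₀3, rfl⟩
  obtain ⟨T, hT1, hT2, hT3, hT4⟩ := h2
  set U := 𝒞.biUnion T with hU
  -- the target family: subsets of U of size ≤ d
  set F : Finset (Finset X) := (Finset.range (d + 1)).biUnion (fun i => U.powersetCard i) with hF
  have hmaps : ∀ C ∈ 𝒞, T C ∈ F := by
    intro C hC
    simp only [hF, Finset.mem_biUnion, Finset.mem_range, Finset.mem_powersetCard]
    exact ⟨(T C).card, Nat.lt_succ_of_le (hd ▸ hT3 C hC),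
      Finset.subset_biUnion_of_mem T hC, rfl⟩
  have hinj : ∀ C ∈ 𝒞, ∀ C' ∈ 𝒞, T C = T C' → C = C' := by
    intro C hC C' hC' heq
    by_contra hne
    exact hT2 C hC C' hC' hne ⟨heq ▸ hT1 C' hC', heq.symm ▸ hT1 C hC⟩
  have hcard : 𝒞.card ≤ F.card := Finset.card_le_card_of_injOn T hmaps hinj
  refine hcard.trans ?_
  have hdisj : (↑(Finset.range (d + 1)) : Set ℕ).PairwiseDisjoint
      (fun i => U.powersetCard i) := by
    intro i _ j _ hij
    simp only [Function.onFun, Finset.disjoint_left]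
    intro S hSi hSj
    rw [Finset.mem_powersetCard] at hSi hSj
    exact hij (hSi.2 ▸ hSj.2)
  rw [hF, Finset.card_biUnion hdisj]
  refine Finset.sum_le_sum ?_
  intro i _
  rw [Finset.card_powersetCard]
  exact Nat.choose_le_choose i (hU ▸ hT4.le)
end

section
/- Every finite concept class C over a finite domain satisfies ANCTD(C) ≥ (1/2)·deg_avg(C), where deg_avg(C) is the average number of neighbors of a concept in C and ANCTD is the average no-clash teaching dimension. -/
/-!
If `C` and `C'` are neighbours differing only at `x`, a non-clashing teacher must put a sample
on `x` into `T C` or into `T C'`. A sample set consistent with `C` can rule out the neighbour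
`C ∆ {x}` only through a sample on `x`, so `T C` rules out at most `|T C|` neighbours of `C`.
Every ordered pair of neighbours is ruled out from one of its two ends, and counting these pairs
from both ends gives `∑ deg C ≤ 2 ∑ |T C|`.
-/

open Finset
open scoped symmDiff

variable {X : Type*} [DecidableEq X]

instance (C : Finset X) (S : Finset (X × Bool)) : Decidable (Consistent C S) :=
  inferInstanceAs (Decidable (∀ p ∈ S, (p.1 ∈ C ↔ p.2 = true)))

lemma Consistent.exists_mem_symmDiff {C C' : Finset X} {S : Finset (X × Bool)}
    (h : Consistent C S) (h' : ¬ Consistent C' S) : ∃ p ∈ S, p.1 ∈ C ∆ C' := by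
  by_contra! hS
  refine h' fun p hp => ?_
  have := hS p hp
  rw [mem_symmDiff] at this
  rw [← h p hp]
  tauto

lemma Consistent.card_neighbors_inconsistent_le {C : Finset X} {S : Finset (X × Bool)}
    (h : Consistent C S) (𝒟 : Finset (Finset X)) :
    #{D ∈ 𝒟 | #(C ∆ D) = 1 ∧ ¬ Consistent D S} ≤ #S := by
  refine (card_le_card_of_injOn (C ∆ ·) ?_ (symmDiff_right_injective C).injOn).trans
    (card_image_le (s := S) (f := fun p => {p.1}))
  intro D hD
  obtain ⟨-, hcard, hD⟩ := mem_filter.mp hD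
  obtain ⟨p, hp, hpD⟩ := h.exists_mem_symmDiff hD
  obtain ⟨x, hx⟩ := card_eq_one.mp hcard
  rw [hx, mem_singleton] at hpD
  exact mem_image.mpr ⟨p, hp, by simp [hx, hpD]⟩

lemma sum_card_filter_le_two_mul {α : Type*} (s : Finset α) (r c : α → α → Prop)
    [DecidableRel r] [DecidableRel c] (hr : ∀ a b, r a b → r b a)
    (hc : ∀ a ∈ s, ∀ b ∈ s, r a b → c a b ∨ c b a) :
    ∑ a ∈ s, #{b ∈ s | r a b} ≤ 2 * ∑ a ∈ s, #{b ∈ s | r a b ∧ c a b} := by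
  have hsplit : ∀ a ∈ s,
      #{b ∈ s | r a b} ≤ #{b ∈ s | r a b ∧ c a b} + #{b ∈ s | r a b ∧ c b a} := by
    classical
    intro a ha
    calc #{b ∈ s | r a b} ≤ #({b ∈ s | r a b ∧ c a b} ∪ {b ∈ s | r a b ∧ c b a}) := by
          refine card_le_card fun b hb => ?_
          obtain ⟨hb, hab⟩ := mem_filter.mp hb
          simpa [hb, hab] using hc a ha b hb hab
      _ ≤ #{b ∈ s | r a b ∧ c a b} + #{b ∈ s | r a b ∧ c b a} := card_union_le _ _
  have hswap : ∑ a ∈ s, #{b ∈ s | r a b ∧ c b a} = ∑ a ∈ s, #{b ∈ s | r a b ∧ c a b} := by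
    simp only [card_filter]
    rw [sum_comm]
    refine sum_congr rfl fun a _ => sum_congr rfl fun b _ => ?_
    simp only [(⟨hr b a, hr a b⟩ : r b a ↔ r a b)]
  calc ∑ a ∈ s, #{b ∈ s | r a b}
      ≤ ∑ a ∈ s, (#{b ∈ s | r a b ∧ c a b} + #{b ∈ s | r a b ∧ c b a}) := sum_le_sum hsplit
    _ = 2 * ∑ a ∈ s, #{b ∈ s | r a b ∧ c a b} := by rw [sum_add_distrib, hswap, two_mul]

lemma sum_degIn_le_two_mul_sum_card {𝒞 : Finset (Finset X)} {T : Finset X → Finset (X × Bool)}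
    (hT : IsTeacher 𝒞 T) (hNC : NonClashing 𝒞 T) :
    ∑ C ∈ 𝒞, degIn 𝒞 C ≤ 2 * ∑ C ∈ 𝒞, #(T C) := by
  refine (sum_card_filter_le_two_mul 𝒞 (fun C D => #(C ∆ D) = 1)
    (fun C D => ¬ Consistent D (T C)) (fun C D h => by rwa [symmDiff_comm] at h) ?_).trans ?_
  · intro C hC D hD hCD
    have hne : C ≠ D := by rintro rfl; simp at hCD
    by_contra! h
    exact hNC C hC D hD hne h
  · exact Nat.mul_le_mul_left 2 (sum_le_sum fun C hC => (hT C hC).card_neighbors_inconsistent_le 𝒞)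

def labelSample (U C : Finset X) : Finset (X × Bool) :=
  U.image fun x => (x, decide (x ∈ C))

lemma consistent_labelSample (U C : Finset X) : Consistent C (labelSample U C) := by
  simp [Consistent, labelSample]

lemma eq_of_consistent_labelSample {U C C' : Finset X} (hC : C ⊆ U) (hC' : C' ⊆ U)
    (h : Consistent C' (labelSample U C)) : C' = C := by
  ext x
  by_cases hx : x ∈ U
  · simpa using h (x, decide (x ∈ C)) (mem_image_of_mem _ hx)
  · exact iff_of_false (fun h => hx (hC' h)) (fun h => hx (hC h))

lemma exists_isTeacher_nonClashing (𝒞 : Finset (Finset X)) :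
    ∃ T, IsTeacher 𝒞 T ∧ NonClashing 𝒞 T := by
  refine ⟨labelSample (𝒞.sup id), fun C _ => consistent_labelSample _ C, ?_⟩
  rintro C hC C' hC' hne ⟨h, -⟩
  exact hne (eq_of_consistent_labelSample (le_sup (f := id) hC) (le_sup (f := id) hC') h).symm

theorem ANCTD_ge_half_degAvg_general {X : Type*} [DecidableEq X]
    (𝒞 : Finset (Finset X)) :
    degAvg 𝒞 / 2 ≤ ANCTD 𝒞 := by
  obtain ⟨T₀, hT₀, hNC₀⟩ := exists_isTeacher_nonClashing 𝒞
  refine le_csInf ⟨_, T₀, hT₀, hNC₀, rfl⟩ ?_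
  rintro q ⟨T, hT, hNC, rfl⟩
  have hsum : ∑ C ∈ 𝒞, (degIn 𝒞 C : ℝ) ≤ 2 * ∑ C ∈ 𝒞, (#(T C) : ℝ) := by
    exact_mod_cast sum_degIn_le_two_mul_sum_card hT hNC
  rw [degAvg, div_right_comm]
  exact div_le_div_of_nonneg_right (by linarith) (Nat.cast_nonneg _)

/-- `ANCTD(𝒞) ≥ deg_avg(𝒞) / 2`. -/
theorem ANCTD_ge_half_degAvg {X : Type*} [DecidableEq X] [Fintype X]
    (𝒞 : Finset (Finset X)) (h𝒞 : 𝒞.Nonempty) :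
    degAvg 𝒞 / 2 ≤ ANCTD 𝒞 :=
  ANCTD_ge_half_degAvg_general 𝒞
end

section
/- Every finite concept class C over a finite domain satisfies NCTD⁺(C) ≥ max_{C∈C} dom_C(C), where dom_C(C) is the number of concepts C' ∈ C with C' ⊆ C and |C \ C'| = 1. -/
open Finset

variable {X : Type*} [DecidableEq X]

/-- The dominance of `C` in `𝒞`: the number of smaller neighbors of `C`. -/
def domIn (𝒞 : Finset (Finset X)) (C : Finset X) : ℕ :=
  (𝒞.filter (fun C' => C' ⊆ C ∧ (C \ C').card = 1)).card

/-- `NCTD⁺(𝒞) ≥ max_{C ∈ 𝒞} dom_𝒞(C)`. -/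
theorem NCTDplus_ge_sup_dom {X : Type*} [DecidableEq X] [Fintype X]
    (𝒞 : Finset (Finset X)) :
    𝒞.sup (fun C => domIn 𝒞 C) ≤ NCTDplus 𝒞 := by
  have hne : {d | ∃ T : Finset X → Finset X,
      IsPosTeacher 𝒞 T ∧ PosNonClashing 𝒞 T ∧ ∀ C ∈ 𝒞, (T C).card ≤ d}.Nonempty := by
    refine ⟨Fintype.card X, id, fun C _ => subset_refl C, ?_, fun C _ => card_le_univ C⟩
    intro C _ C' _ hCC' ⟨h1, h2⟩
    exact hCC' (subset_antisymm h1 h2)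
  apply le_csInf hne
  rintro d ⟨T, hT, hNC, hB⟩
  apply Finset.sup_le
  intro C hC
  refine le_trans ?_ (hB C hC)
  unfold domIn
  set s := 𝒞.filter (fun C' => C' ⊆ C ∧ (C \ C').card = 1) with hs
  have key : ∀ C' ∈ s, C \ C' ⊆ T C := by
    intro C' hC'
    rw [hs, Finset.mem_filter] at hC'
    obtain ⟨hC'𝒞, hsub, hcard⟩ := hC'
    obtain ⟨x, hx⟩ := Finset.card_eq_one.mp hcard
    have hCC' : C ≠ C' := by
      intro h; rw [h, sdiff_self] at hx
      exact (Finset.singleton_ne_empty x) hx.symm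
    have hnsub : ¬ T C ⊆ C' := by
      intro hTsub
      exact hNC C hC C' hC'𝒞 hCC' ⟨hTsub, (hT C' hC'𝒞).trans (hsub.trans (subset_refl C))⟩
    obtain ⟨y, hyT, hyC'⟩ := Finset.not_subset.mp hnsub
    have hyC : y ∈ C := hT C hC hyT
    have : y ∈ C \ C' := Finset.mem_sdiff.mpr ⟨hyC, hyC'⟩
    rw [hx, Finset.mem_singleton] at this
    rw [hx, Finset.singleton_subset_iff, ← this]
    exact hyT
  rcases s.eq_empty_or_nonempty with he | ⟨C'0, hC'0⟩
  · simp [he]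
  · have hC'0' := hC'0
    rw [hs, Finset.mem_filter] at hC'0'
    obtain ⟨x0, hx0⟩ := Finset.card_eq_one.mp hC'0'.2.2
    have hx0C : x0 ∈ C := by
      have : x0 ∈ C \ C'0 := hx0 ▸ Finset.mem_singleton_self x0
      exact (Finset.mem_sdiff.mp this).1
    classical
    set f : Finset X → X := fun C' =>
      if h : (C \ C').Nonempty then h.choose else x0 with hf
    apply Finset.card_le_card_of_injOn f
    · intro C' hC'
      have hmem := Finset.mem_filter.mp (hs ▸ hC')
      obtain ⟨x, hx⟩ := Finset.card_eq_one.mp hmem.2.2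
      have hne' : (C \ C').Nonempty := ⟨x, hx ▸ Finset.mem_singleton_self x⟩
      have : f C' ∈ C \ C' := by
        rw [hf]; simp only [hne', dif_pos]; exact hne'.choose_spec
      exact key C' hC' this
    · intro C1 h1 C2 h2 hfeq
      have hm1 := Finset.mem_filter.mp (hs ▸ h1)
      have hm2 := Finset.mem_filter.mp (hs ▸ h2)
      obtain ⟨x1, hx1⟩ := Finset.card_eq_one.mp hm1.2.2
      obtain ⟨x2, hx2⟩ := Finset.card_eq_one.mp hm2.2.2
      have hne1 : (C \ C1).Nonempty := ⟨x1, hx1 ▸ Finset.mem_singleton_self x1⟩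
      have hne2 : (C \ C2).Nonempty := ⟨x2, hx2 ▸ Finset.mem_singleton_self x2⟩
      have mem1 : f C1 ∈ C \ C1 := by
        rw [hf]; simp only [hne1, dif_pos]; exact hne1.choose_spec
      have mem2 : f C2 ∈ C \ C2 := by
        rw [hf]; simp only [hne2, dif_pos]; exact hne2.choose_spec
      have e1 : f C1 = x1 := Finset.mem_singleton.mp (by rw [← hx1]; exact mem1)
      have e2 : f C2 = x2 := Finset.mem_singleton.mp (by rw [← hx2]; exact mem2)
      have hx12 : x1 = x2 := by rw [← e1, ← e2, hfeq]
      have r1 : C1 = C \ (C \ C1) := (Finset.sdiff_sdiff_eq_self hm1.2.1).symm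
      have r2 : C2 = C \ (C \ C2) := (Finset.sdiff_sdiff_eq_self hm2.2.1).symm
      rw [r1, r2, hx1, hx2, hx12]
end

section
/- Let C₁ and C₂ be concept classes over disjoint finite domains X₁ and X₂, and let T₁, T₂ be non-clashing teacher mappings for C₁ and C₂ respectively. Then the mapping T defined by T(C₁ ∪ C₂) = T₁(C₁) ∪ T₂(C₂) is a non-clashing teacher mapping for the free combination C₁ ⊔ C₂ = {C₁ ∪ C₂ : C₁ ∈ C₁, C₂ ∈ C₂}. -/
open Finset

variable {X : Type*} [DecidableEq X]

variable {X₁ X₂ : Type*} [DecidableEq X₁] [DecidableEq X₂]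

/-- The free combination of two concept classes over disjoint domains. -/
def FreeComb (𝒞₁ : Finset (Finset X₁)) (𝒞₂ : Finset (Finset X₂)) :
    Finset (Finset (X₁ ⊕ X₂)) :=
  (𝒞₁ ×ˢ 𝒞₂).image (fun p => p.1.image Sum.inl ∪ p.2.image Sum.inr)

variable [Fintype X₁] [Fintype X₂]

/-- The left part of a concept over the disjoint-union domain. -/
def leftPart (D : Finset (X₁ ⊕ X₂)) : Finset X₁ :=
  Finset.univ.filter (fun a => Sum.inl a ∈ D)

/-- The right part of a concept over the disjoint-union domain. -/
def rightPart (D : Finset (X₁ ⊕ X₂)) : Finset X₂ :=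
  Finset.univ.filter (fun b => Sum.inr b ∈ D)

/-- The combined teacher mapping `T(C₁ ∪ C₂) = T₁(C₁) ∪ T₂(C₂)`. -/
def combTeacher (T₁ : Finset X₁ → Finset (X₁ × Bool))
    (T₂ : Finset X₂ → Finset (X₂ × Bool)) :
    Finset (X₁ ⊕ X₂) → Finset ((X₁ ⊕ X₂) × Bool) :=
  fun D =>
    (T₁ (leftPart D)).image (fun p => (Sum.inl p.1, p.2)) ∪
      (T₂ (rightPart D)).image (fun p => (Sum.inr p.1, p.2))

lemma leftPart_mk (C₁ : Finset X₁) (C₂ : Finset X₂) :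
    leftPart (C₁.image Sum.inl ∪ C₂.image Sum.inr) = C₁ := by
  ext a; simp [leftPart]

lemma rightPart_mk (C₁ : Finset X₁) (C₂ : Finset X₂) :
    rightPart (C₁.image Sum.inl ∪ C₂.image Sum.inr) = C₂ := by
  ext b; simp [rightPart]

lemma mem_left_iff (D : Finset (X₁ ⊕ X₂)) (a : X₁) :
    Sum.inl a ∈ D ↔ a ∈ leftPart D := by simp [leftPart]

lemma mem_right_iff (D : Finset (X₁ ⊕ X₂)) (b : X₂) :
    Sum.inr b ∈ D ↔ b ∈ rightPart D := by simp [rightPart]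

lemma comb_consistent_iff (T₁ : Finset X₁ → Finset (X₁ × Bool))
    (T₂ : Finset X₂ → Finset (X₂ × Bool)) (D D' : Finset (X₁ ⊕ X₂)) :
    Consistent D (combTeacher T₁ T₂ D') ↔
      Consistent (leftPart D) (T₁ (leftPart D')) ∧
        Consistent (rightPart D) (T₂ (rightPart D')) := by
  constructor
  · intro h
    constructor
    · intro p hp
      have := h (Sum.inl p.1, p.2)
        (mem_union_left _ (mem_image_of_mem (fun q => (Sum.inl q.1, q.2)) hp))
      simpa [mem_left_iff] using this
    · intro p hp
      have := h (Sum.inr p.1, p.2)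
        (mem_union_right _ (mem_image_of_mem (fun q => (Sum.inr q.1, q.2)) hp))
      simpa [mem_right_iff] using this
  · rintro ⟨h1, h2⟩ p hp
    rcases mem_union.1 hp with h | h
    · obtain ⟨q, hq, rfl⟩ := mem_image.1 h
      simpa [mem_left_iff] using h1 q hq
    · obtain ⟨q, hq, rfl⟩ := mem_image.1 h
      simpa [mem_right_iff] using h2 q hq

/-- the combined mapping is a non-clashing teacher mapping
for the free combination. -/
theorem combTeacher_isTeacher_nonClashing
    (𝒞₁ : Finset (Finset X₁)) (𝒞₂ : Finset (Finset X₂))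
    (T₁ : Finset X₁ → Finset (X₁ × Bool)) (T₂ : Finset X₂ → Finset (X₂ × Bool))
    (hT₁ : IsTeacher 𝒞₁ T₁) (hNC₁ : NonClashing 𝒞₁ T₁)
    (hT₂ : IsTeacher 𝒞₂ T₂) (hNC₂ : NonClashing 𝒞₂ T₂) :
    IsTeacher (FreeComb 𝒞₁ 𝒞₂) (combTeacher T₁ T₂) ∧
      NonClashing (FreeComb 𝒞₁ 𝒞₂) (combTeacher T₁ T₂) := by
  
  constructor
  · intro D hD
    simp only [FreeComb, mem_image, mem_product] at hD
    obtain ⟨⟨C₁, C₂⟩, ⟨h1, h2⟩, rfl⟩ := hD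
    rw [comb_consistent_iff]
    simp only [leftPart_mk, rightPart_mk]
    exact ⟨hT₁ _ h1, hT₂ _ h2⟩
  · intro D hD D' hD' hne ⟨hc1, hc2⟩
    simp only [FreeComb, mem_image, mem_product] at hD hD'
    obtain ⟨⟨C₁, C₂⟩, ⟨h1, h2⟩, rfl⟩ := hD
    obtain ⟨⟨C₁', C₂'⟩, ⟨h1', h2'⟩, rfl⟩ := hD'
    rw [comb_consistent_iff] at hc1 hc2
    simp only [leftPart_mk, rightPart_mk] at hc1 hc2
    by_cases hc : C₁ = C₁'
    · subst hc
      have hc2ne : C₂ ≠ C₂' := fun h => hne (by rw [h])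
      exact hNC₂ C₂ h2 C₂' h2' hc2ne ⟨hc1.2, hc2.2⟩
    · exact hNC₁ C₁ h1 C₁' h1' hc ⟨hc1.1, hc2.1⟩
end

section
/- For concept classes C₁ and C₂ over disjoint finite domains, NCTD(C₁ ⊔ C₂) ≤ NCTD(C₁) + NCTD(C₂), where C₁ ⊔ C₂ is the free combination. -/
open Finset

variable {X : Type*} [DecidableEq X]

variable {X₁ X₂ : Type*} [DecidableEq X₁] [DecidableEq X₂]

/-- The NCTD defining set is nonempty over a finite domain. -/
lemma NCTD_set_nonempty {Y : Type*} [DecidableEq Y] [Fintype Y]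
    (𝒞 : Finset (Finset Y)) :
    {d | ∃ T : Finset Y → Finset (Y × Bool),
      IsTeacher 𝒞 T ∧ NonClashing 𝒞 T ∧ ∀ C ∈ 𝒞, (T C).card ≤ d}.Nonempty := by
  refine ⟨Fintype.card Y, fun C => Finset.univ.image (fun x => (x, decide (x ∈ C))),
    ?_, ?_, ?_⟩
  · intro C _ p hp
    simp only [Finset.mem_image, Finset.mem_univ, true_and] at hp
    obtain ⟨x, hx⟩ := hp
    subst hx
    simp
  · rintro C _ C' _ hne ⟨h1, _⟩
    apply hne
    ext x
    have := h1 (x, decide (x ∈ C)) (by simp)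
    simp only [decide_eq_true_eq] at this
    exact (this.symm.trans (by simp))
  · intro C _
    exact (Finset.card_image_le).trans (by simp)

lemma NCTD_mem {Y : Type*} [DecidableEq Y] [Fintype Y] (𝒞 : Finset (Finset Y)) :
    ∃ T : Finset Y → Finset (Y × Bool),
      IsTeacher 𝒞 T ∧ NonClashing 𝒞 T ∧ ∀ C ∈ 𝒞, (T C).card ≤ NCTD 𝒞 :=
  Nat.sInf_mem (NCTD_set_nonempty 𝒞)

/-- sub-additivity of NCTD under free combination. -/
theorem NCTD_freeComb_le [Fintype X₁] [Fintype X₂]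
    (𝒞₁ : Finset (Finset X₁)) (𝒞₂ : Finset (Finset X₂)) :
    NCTD (FreeComb 𝒞₁ 𝒞₂) ≤ NCTD 𝒞₁ + NCTD 𝒞₂ := by
  obtain ⟨T₁, hT₁, hN₁, hd₁⟩ := NCTD_mem 𝒞₁
  obtain ⟨T₂, hT₂, hN₂, hd₂⟩ := NCTD_mem 𝒞₂
  -- projections
  set l : Finset (X₁ ⊕ X₂) → Finset X₁ :=
    fun C => Finset.univ.filter (fun x => Sum.inl x ∈ C) with hl
  set r : Finset (X₁ ⊕ X₂) → Finset X₂ :=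
    fun C => Finset.univ.filter (fun x => Sum.inr x ∈ C) with hr
  set T : Finset (X₁ ⊕ X₂) → Finset ((X₁ ⊕ X₂) × Bool) :=
    fun C => ((T₁ (l C)).image (fun p => (Sum.inl p.1, p.2))) ∪
             ((T₂ (r C)).image (fun p => (Sum.inr p.1, p.2))) with hT
  -- membership decomposition
  have hmem : ∀ C ∈ FreeComb 𝒞₁ 𝒞₂, l C ∈ 𝒞₁ ∧ r C ∈ 𝒞₂ ∧
      C = (l C).image Sum.inl ∪ (r C).image Sum.inr := by
    intro C hC
    simp only [FreeComb, Finset.mem_image, Finset.mem_product] at hC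
    obtain ⟨⟨A, B⟩, ⟨hA, hB⟩, hAB⟩ := hC
    have hlC : l C = A := by
      ext x; simp [hl, ← hAB]
    have hrC : r C = B := by
      ext x; simp [hr, ← hAB]
    exact ⟨hlC ▸ hA, hrC ▸ hB, by rw [hlC, hrC, hAB]⟩
  have key : NCTD 𝒞₁ + NCTD 𝒞₂ ∈
      {d | ∃ T : Finset (X₁ ⊕ X₂) → Finset ((X₁ ⊕ X₂) × Bool),
        IsTeacher (FreeComb 𝒞₁ 𝒞₂) T ∧ NonClashing (FreeComb 𝒞₁ 𝒞₂) T ∧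
        ∀ C ∈ FreeComb 𝒞₁ 𝒞₂, (T C).card ≤ d} := by
    refine ⟨T, ?_, ?_, ?_⟩
    · intro C hC p hp
      obtain ⟨hA, hB, hCeq⟩ := hmem C hC
      simp only [hT, Finset.mem_union, Finset.mem_image] at hp
      rcases hp with ⟨⟨x, b⟩, hxb, hpe⟩ | ⟨⟨x, b⟩, hxb, hpe⟩
      · subst hpe
        have h1 := hT₁ (l C) hA (x, b) hxb
        simpa [hl] using h1
      · subst hpe
        have h1 := hT₂ (r C) hB (x, b) hxb
        simpa [hr] using h1
    · rintro C hC C' hC' hne ⟨h1, h2⟩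
      obtain ⟨hA, hB, hCeq⟩ := hmem C hC
      obtain ⟨hA', hB', hCeq'⟩ := hmem C' hC'
      have hsplit : l C ≠ l C' ∨ r C ≠ r C' := by
        by_contra h
        push_neg at h
        exact hne (by rw [hCeq, hCeq', h.1, h.2])
      rcases hsplit with h | h
      · refine hN₁ (l C) hA (l C') hA' h ⟨?_, ?_⟩
        · intro ⟨x, b⟩ hxb
          have := h1 (Sum.inl x, b) (Finset.mem_union_left _ (Finset.mem_image_of_mem _ hxb))
          simpa [hl] using this
        · intro ⟨x, b⟩ hxb
          have := h2 (Sum.inl x, b) (Finset.mem_union_left _ (Finset.mem_image_of_mem _ hxb))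
          simpa [hl] using this
      · refine hN₂ (r C) hB (r C') hB' h ⟨?_, ?_⟩
        · intro ⟨x, b⟩ hxb
          have := h1 (Sum.inr x, b) (Finset.mem_union_right _ (Finset.mem_image_of_mem _ hxb))
          simpa [hr] using this
        · intro ⟨x, b⟩ hxb
          have := h2 (Sum.inr x, b) (Finset.mem_union_right _ (Finset.mem_image_of_mem _ hxb))
          simpa [hr] using this
    · intro C hC
      obtain ⟨hA, hB, _⟩ := hmem C hC
      calc (T C).card ≤ ((T₁ (l C)).image (fun p => (Sum.inl p.1, p.2))).card +
            ((T₂ (r C)).image (fun p => (Sum.inr p.1, p.2))).card :=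
            Finset.card_union_le _ _
        _ ≤ (T₁ (l C)).card + (T₂ (r C)).card :=
            Nat.add_le_add Finset.card_image_le Finset.card_image_le
        _ ≤ NCTD 𝒞₁ + NCTD 𝒞₂ := Nat.add_le_add (hd₁ _ hA) (hd₂ _ hB)
  exact Nat.sInf_le key
end

section
/- For concept classes C₁ and C₂ over disjoint finite domains, NCTD⁺(C₁ ⊔ C₂) ≤ NCTD⁺(C₁) + NCTD⁺(C₂). -/
open Finset

variable {X : Type*} [DecidableEq X]

variable {X₁ X₂ : Type*} [DecidableEq X₁] [DecidableEq X₂]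

lemma NCTDplus_spec {X : Type*} [DecidableEq X] [Fintype X] (𝒞 : Finset (Finset X)) :
    ∃ T : Finset X → Finset X, IsPosTeacher 𝒞 T ∧ PosNonClashing 𝒞 T ∧
      ∀ C ∈ 𝒞, (T C).card ≤ NCTDplus 𝒞 := by
  have hne : {d | ∃ T : Finset X → Finset X,
      IsPosTeacher 𝒞 T ∧ PosNonClashing 𝒞 T ∧ ∀ C ∈ 𝒞, (T C).card ≤ d}.Nonempty := by
    refine ⟨Fintype.card X, id, ?_, ?_, ?_⟩
    · intro C hC; exact subset_rfl
    · rintro C hC C' hC' hne ⟨h1, h2⟩; exact hne (le_antisymm h1 h2)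
    · intro C hC; exact Finset.card_le_univ C
  exact Nat.sInf_mem hne

lemma mem_enc_inl {A : Finset X₁} {B : Finset X₂} {x : X₁} :
    Sum.inl x ∈ A.image Sum.inl ∪ B.image Sum.inr ↔ x ∈ A := by
  simp

lemma mem_enc_inr {A : Finset X₁} {B : Finset X₂} {x : X₂} :
    Sum.inr x ∈ A.image Sum.inl ∪ B.image Sum.inr ↔ x ∈ B := by
  simp

/-- sub-additivity of NCTD⁺ under free combination. -/
theorem NCTDplus_freeComb_le [Fintype X₁] [Fintype X₂]
    (𝒞₁ : Finset (Finset X₁)) (𝒞₂ : Finset (Finset X₂)) :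
    NCTDplus (FreeComb 𝒞₁ 𝒞₂) ≤ NCTDplus 𝒞₁ + NCTDplus 𝒞₂ := by
  obtain ⟨T₁, hT₁, hN₁, hc₁⟩ := NCTDplus_spec 𝒞₁
  obtain ⟨T₂, hT₂, hN₂, hc₂⟩ := NCTDplus_spec 𝒞₂
  set T : Finset (X₁ ⊕ X₂) → Finset (X₁ ⊕ X₂) := fun D =>
    (T₁ (D.preimage Sum.inl Sum.inl_injective.injOn)).image Sum.inl ∪
    (T₂ (D.preimage Sum.inr Sum.inr_injective.injOn)).image Sum.inr with hT
  -- decoding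
  have decode : ∀ D ∈ FreeComb 𝒞₁ 𝒞₂, ∃ A ∈ 𝒞₁, ∃ B ∈ 𝒞₂,
      D = A.image Sum.inl ∪ B.image Sum.inr ∧
      D.preimage Sum.inl Sum.inl_injective.injOn = A ∧
      D.preimage Sum.inr Sum.inr_injective.injOn = B := by
    intro D hD
    simp only [FreeComb, Finset.mem_image, Finset.mem_product] at hD
    obtain ⟨⟨A, B⟩, ⟨hA, hB⟩, hEq⟩ := hD
    refine ⟨A, hA, B, hB, hEq.symm, ?_, ?_⟩
    · ext x; simp [Finset.mem_preimage, ← hEq]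
    · ext x; simp [Finset.mem_preimage, ← hEq]
  apply Nat.sInf_le
  refine ⟨T, ?_, ?_, ?_⟩
  · intro D hD
    obtain ⟨A, hA, B, hB, hEq, h1, h2⟩ := decode D hD
    simp only [hT]
    rw [h1, h2, hEq]
    exact Finset.union_subset_union (Finset.image_subset_image (hT₁ A hA))
      (Finset.image_subset_image (hT₂ B hB))
  · intro D hD D' hD' hne hcl
    obtain ⟨A, hA, B, hB, hEq, h1, h2⟩ := decode D hD
    obtain ⟨A', hA', B', hB', hEq', h1', h2'⟩ := decode D' hD'
    obtain ⟨s1, s2⟩ := hcl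
    simp only [hT] at s1 s2
    rw [h1, h2, hEq'] at s1
    rw [h1', h2', hEq] at s2
    have tAA' : T₁ A ⊆ A' := fun x hx => mem_enc_inl.mp
      (s1 (Finset.mem_union_left _ (Finset.mem_image_of_mem _ hx)))
    have tA'A : T₁ A' ⊆ A := fun x hx => mem_enc_inl.mp
      (s2 (Finset.mem_union_left _ (Finset.mem_image_of_mem _ hx)))
    have tBB' : T₂ B ⊆ B' := fun x hx => mem_enc_inr.mp
      (s1 (Finset.mem_union_right _ (Finset.mem_image_of_mem _ hx)))
    have tB'B : T₂ B' ⊆ B := fun x hx => mem_enc_inr.mp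
      (s2 (Finset.mem_union_right _ (Finset.mem_image_of_mem _ hx)))
    by_cases hAA : A = A'
    · by_cases hBB : B = B'
      · exact hne (by rw [hEq, hEq', hAA, hBB])
      · exact hN₂ B hB B' hB' hBB ⟨tBB', tB'B⟩
    · exact hN₁ A hA A' hA' hAA ⟨tAA', tA'A⟩
  · intro D hD
    obtain ⟨A, hA, B, hB, hEq, h1, h2⟩ := decode D hD
    simp only [hT, h1, h2]
    calc ((T₁ A).image Sum.inl ∪ (T₂ B).image Sum.inr).card
        ≤ ((T₁ A).image Sum.inl).card + ((T₂ B).image Sum.inr).card :=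
          Finset.card_union_le _ _
      _ = (T₁ A).card + (T₂ B).card := by
          rw [Finset.card_image_of_injective _ Sum.inl_injective,
            Finset.card_image_of_injective _ Sum.inr_injective]
      _ ≤ NCTDplus 𝒞₁ + NCTDplus 𝒞₂ := add_le_add (hc₁ A hA) (hc₂ B hB)
end

section
/- If C is any concept class over a finite domain X, then NCTD(C) ≤ ⌈|X|/2⌉. -/
open Finset

variable {X : Type*} [DecidableEq X]

/-- Key boolean lemma: the per-pair encoding is non-clashing. -/
lemma nctd_bool_key : ∀ p q r s : Bool,
    (if p = q then r = p else s = q) →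
    (if r = s then p = r else q = s) → p = r ∧ q = s := by decide

def nctdBuddyIdx (n i : ℕ) : ℕ :=
  if i % 2 = 0 then (if i + 1 < n then i + 1 else i) else i - 1

lemma nctdBuddyIdx_lt {n i : ℕ} (h : i < n) : nctdBuddyIdx n i < n := by
  unfold nctdBuddyIdx; split_ifs <;> omega

lemma nctd_count_even (n : ℕ) :
    (∑ i ∈ Finset.range n, (if i % 2 = 0 then 1 else 0)) = (n + 1) / 2 := by
  induction n with
  | zero => simp
  | succ n ih =>
    rw [Finset.sum_range_succ, ih]
    split_ifs <;> omega

/-- `NCTD(𝒞) ≤ ⌈|X|/2⌉` for any class `𝒞` over a finite domain. -/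
theorem NCTD_le_ceil_half_card {X : Type*} [DecidableEq X] [Fintype X]
    (𝒞 : Finset (Finset X)) :
    NCTD 𝒞 ≤ (Fintype.card X + 1) / 2 := by
  classical
  apply Nat.sInf_le
  set n := Fintype.card X with hn
  let e : X ≃ Fin n := Fintype.equivFin X
  let bud : X → X := fun x =>
    e.symm ⟨nctdBuddyIdx n (e x), nctdBuddyIdx_lt (e x).isLt⟩
  have hbud : ∀ x : X, ((e (bud x)) : ℕ) = nctdBuddyIdx n (e x) := by
    intro x; simp [bud]
  let L : Finset X := univ.filter (fun x => ((e x) : ℕ) % 2 = 0)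
  let pick : Finset X → X → X × Bool := fun C a =>
    if decide (a ∈ C) = decide (bud a ∈ C) then (a, decide (a ∈ C))
    else (bud a, decide (bud a ∈ C))
  refine ⟨fun C => L.image (pick C), ?_, ?_, ?_⟩
  · -- teacher
    intro C _ p hp
    obtain ⟨a, _, rfl⟩ := Finset.mem_image.mp hp
    simp only [pick]
    split_ifs <;> simp
  · -- non-clashing
    intro C _ C' _ hne ⟨h1, h2⟩
    obtain ⟨x, hx⟩ : ∃ x, ¬ (x ∈ C ↔ x ∈ C') := by
      by_contra h
      push_neg at h
      exact hne (Finset.ext fun a => h a)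
    -- the leader of x's pair
    have hcases : ((e x) : ℕ) % 2 = 0 ∨ ((e x) : ℕ) % 2 = 1 := Nat.mod_two_eq_zero_or_one _
    obtain ⟨a, ha_even, hx_ab⟩ : ∃ a : X, ((e a) : ℕ) % 2 = 0 ∧ (x = a ∨ x = bud a) := by
      rcases hcases with h | h
      · exact ⟨x, h, Or.inl rfl⟩
      · refine ⟨bud x, ?_, Or.inr ?_⟩
        · rw [hbud]; unfold nctdBuddyIdx; rw [if_neg (by omega)]; omega
        · -- bud (bud x) = x
          have hb : ((e (bud x)) : ℕ) = (e x : ℕ) - 1 := by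
            rw [hbud]; unfold nctdBuddyIdx; rw [if_neg (by omega)]
          have hx1 : (e x : ℕ) < n := (e x).isLt
          have : nctdBuddyIdx n ((e (bud x)) : ℕ) = (e x : ℕ) := by
            rw [hb]; unfold nctdBuddyIdx
            rw [if_pos (by omega), if_pos (by omega)]; omega
          have : bud (bud x) = x := by
            simp only [bud]
            rw [e.symm_apply_eq]
            exact Fin.ext this
          exact this.symm
    have ha_mem : a ∈ L := Finset.mem_filter.mpr ⟨Finset.mem_univ _, ha_even⟩
    have hp1 := h1 (pick C a) (Finset.mem_image_of_mem _ ha_mem)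
    have hp2 := h2 (pick C' a) (Finset.mem_image_of_mem _ ha_mem)
    have h1' : if decide (a ∈ C) = decide (bud a ∈ C)
        then decide (a ∈ C') = decide (a ∈ C)
        else decide (bud a ∈ C') = decide (bud a ∈ C) := by
      simp only [pick] at hp1
      split_ifs at hp1 with h
      · rw [if_pos h]; simp_all
      · rw [if_neg h]; simp_all
    have h2' : if decide (a ∈ C') = decide (bud a ∈ C')
        then decide (a ∈ C) = decide (a ∈ C')
        else decide (bud a ∈ C) = decide (bud a ∈ C') := by
      simp only [pick] at hp2
      split_ifs at hp2 with h
      · rw [if_pos h]; simp_all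
      · rw [if_neg h]; simp_all
    have hkey := nctd_bool_key (decide (a ∈ C)) (decide (bud a ∈ C))
      (decide (a ∈ C')) (decide (bud a ∈ C')) h1' h2'
    rcases hx_ab with rfl | rfl
    · exact hx (by simpa using (decide_eq_decide.mp hkey.1))
    · exact hx (by simpa using (decide_eq_decide.mp hkey.2))
  · -- cardinality bound
    intro C _
    refine le_trans (Finset.card_image_le) ?_
    have hL : L.card = (n + 1) / 2 := by
      have h1 : L.card = ∑ x : X, (if ((e x) : ℕ) % 2 = 0 then 1 else 0) := by
        simp only [L]
        rw [Finset.card_filter]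
      rw [h1, ← Equiv.sum_comp e.symm (fun x => if ((e x) : ℕ) % 2 = 0 then (1:ℕ) else 0)]
      simp only [Equiv.apply_symm_apply]
      rw [Fin.sum_univ_eq_sum_range (fun i => if i % 2 = 0 then (1:ℕ) else 0)]
      exact nctd_count_even n
    omega
end

section
/- Let P_m be the powerset over a domain {x₁,…,x_m} and let C be a concept class over a finite domain X disjoint from {x₁,…,x_m}. Then NCTD⁺(P_m ⊔ C) = m + NCTD⁺(C). -/
open Finset

variable {X : Type*} [DecidableEq X]

variable {X₁ X₂ : Type*} [DecidableEq X₁] [DecidableEq X₂]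

section Helpers
set_option linter.unusedSectionVars false
set_option linter.unusedVariables false
variable {α β : Type*} [DecidableEq α] [DecidableEq β]

def glue (A : Finset α) (B : Finset β) : Finset (α ⊕ β) :=
  A.image Sum.inl ∪ B.image Sum.inr

lemma mem_glue_inl {A : Finset α} {B : Finset β} {a : α} :
    Sum.inl a ∈ glue A B ↔ a ∈ A := by
  simp [glue]

lemma mem_glue_inr {A : Finset α} {B : Finset β} {b : β} :
    Sum.inr b ∈ glue A B ↔ b ∈ B := by
  simp [glue]

lemma glue_subset_glue {A A' : Finset α} {B B' : Finset β} :
    glue A B ⊆ glue A' B' ↔ A ⊆ A' ∧ B ⊆ B' := by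
  constructor
  · intro h
    exact ⟨fun a ha => mem_glue_inl.mp (h (mem_glue_inl.mpr ha)),
           fun b hb => mem_glue_inr.mp (h (mem_glue_inr.mpr hb))⟩
  · rintro ⟨h1, h2⟩ x hx
    rcases x with a | b
    · exact mem_glue_inl.mpr (h1 (mem_glue_inl.mp hx))
    · exact mem_glue_inr.mpr (h2 (mem_glue_inr.mp hx))

lemma glue_inj {A A' : Finset α} {B B' : Finset β} :
    glue A B = glue A' B' ↔ A = A' ∧ B = B' := by
  constructor
  · intro h
    have h1 := glue_subset_glue.mp h.le
    have h2 := glue_subset_glue.mp h.ge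
    exact ⟨h1.1.antisymm h2.1, h1.2.antisymm h2.2⟩
  · rintro ⟨rfl, rfl⟩; rfl

lemma card_glue (A : Finset α) (B : Finset β) :
    (glue A B).card = A.card + B.card := by
  rw [glue, card_union_of_disjoint, card_image_of_injective _ Sum.inl_injective,
    card_image_of_injective _ Sum.inr_injective]
  simp [Finset.disjoint_left]

variable [Fintype α] [Fintype β]

def sumFst (S : Finset (α ⊕ β)) : Finset α :=
  Finset.univ.filter (fun a => Sum.inl a ∈ S)

def sumSnd (S : Finset (α ⊕ β)) : Finset β :=
  Finset.univ.filter (fun b => Sum.inr b ∈ S)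

lemma mem_sumFst {S : Finset (α ⊕ β)} {a : α} : a ∈ sumFst S ↔ Sum.inl a ∈ S := by
  simp [sumFst]

lemma mem_sumSnd {S : Finset (α ⊕ β)} {b : β} : b ∈ sumSnd S ↔ Sum.inr b ∈ S := by
  simp [sumSnd]

lemma glue_decomp (S : Finset (α ⊕ β)) : glue (sumFst S) (sumSnd S) = S := by
  ext x
  rcases x with a | b
  · rw [mem_glue_inl, mem_sumFst]
  · rw [mem_glue_inr, mem_sumSnd]

lemma sumFst_glue (A : Finset α) (B : Finset β) : sumFst (glue A B) = A := by
  ext a; rw [mem_sumFst, mem_glue_inl]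

lemma sumSnd_glue (A : Finset α) (B : Finset β) : sumSnd (glue A B) = B := by
  ext b; rw [mem_sumSnd, mem_glue_inr]

lemma sumSnd_mono {S S' : Finset (α ⊕ β)} (h : S ⊆ S') : sumSnd S ⊆ sumSnd S' :=
  fun b hb => mem_sumSnd.mpr (h (mem_sumSnd.mp hb))

end Helpers

lemma mem_freeComb {X₁ X₂ : Type*} [DecidableEq X₁] [DecidableEq X₂]
    {𝒞₁ : Finset (Finset X₁)} {𝒞₂ : Finset (Finset X₂)} {S : Finset (X₁ ⊕ X₂)} :
    S ∈ FreeComb 𝒞₁ 𝒞₂ ↔ ∃ A ∈ 𝒞₁, ∃ B ∈ 𝒞₂, S = glue A B := by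
  simp only [FreeComb, mem_image, mem_product, Prod.exists, glue]
  constructor
  · rintro ⟨A, B, ⟨hA, hB⟩, rfl⟩; exact ⟨A, hA, B, hB, rfl⟩
  · rintro ⟨A, hA, B, hB, rfl⟩; exact ⟨A, B, ⟨hA, hB⟩, rfl⟩

lemma posSet_nonempty {X : Type*} [DecidableEq X] [Fintype X] (𝒞 : Finset (Finset X)) :
    {d | ∃ T : Finset X → Finset X,
      IsPosTeacher 𝒞 T ∧ PosNonClashing 𝒞 T ∧ ∀ C ∈ 𝒞, (T C).card ≤ d}.Nonempty := by
  refine ⟨Fintype.card X, id, fun C _ => subset_rfl, ?_, fun C _ => ?_⟩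
  · rintro C _ C' _ hne ⟨h1, h2⟩
    exact hne (h1.antisymm h2)
  · simpa using Finset.card_le_univ C


/-- `NCTD⁺(P_m ⊔ 𝒞) = m + NCTD⁺(𝒞)`. -/
theorem NCTDplus_powerset_freeComb (m : ℕ) {X : Type*} [DecidableEq X] [Fintype X]
    (𝒞 : Finset (Finset X)) (h𝒞 : 𝒞.Nonempty) :
    NCTDplus (FreeComb (Finset.univ : Finset (Finset (Fin m))) 𝒞)
      = m + NCTDplus 𝒞 := by
  classical
  set N := NCTDplus 𝒞 with hN
  -- obtain an optimal positive teacher for 𝒞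
  obtain ⟨T₀, hT₀t, hT₀nc, hT₀b⟩ := Nat.sInf_mem (posSet_nonempty 𝒞)
  -- upper bound: build a teacher for the free combination
  have hmem : (m + N) ∈ {d | ∃ T : Finset (Fin m ⊕ X) → Finset (Fin m ⊕ X),
      IsPosTeacher (FreeComb (Finset.univ : Finset (Finset (Fin m))) 𝒞) T ∧
      PosNonClashing (FreeComb (Finset.univ : Finset (Finset (Fin m))) 𝒞) T ∧
      ∀ C ∈ FreeComb (Finset.univ : Finset (Finset (Fin m))) 𝒞, (T C).card ≤ d} := by
    refine ⟨fun S => glue (sumFst S) (T₀ (sumSnd S)), ?_, ?_, ?_⟩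
    · rintro S hS
      obtain ⟨A, -, C, hC, rfl⟩ := mem_freeComb.mp hS
      simp only [sumFst_glue, sumSnd_glue]
      exact glue_subset_glue.mpr ⟨subset_rfl, hT₀t C hC⟩
    · rintro S hS S' hS' hne ⟨h1, h2⟩
      obtain ⟨A, -, C, hC, rfl⟩ := mem_freeComb.mp hS
      obtain ⟨A', -, C', hC', rfl⟩ := mem_freeComb.mp hS'
      simp only [sumFst_glue, sumSnd_glue] at h1 h2
      obtain ⟨hAA', hTC⟩ := glue_subset_glue.mp h1
      obtain ⟨hA'A, hTC'⟩ := glue_subset_glue.mp h2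
      have hA : A = A' := hAA'.antisymm hA'A
      by_cases hCC : C = C'
      · exact hne (glue_inj.mpr ⟨hA, hCC⟩)
      · exact hT₀nc C hC C' hC' hCC ⟨hTC, hTC'⟩
    · rintro S hS
      obtain ⟨A, -, C, hC, rfl⟩ := mem_freeComb.mp hS
      simp only [sumFst_glue, sumSnd_glue, card_glue]
      have hA : A.card ≤ m := by simpa using Finset.card_le_univ A
      exact Nat.add_le_add hA (hT₀b C hC)
  have hub : NCTDplus (FreeComb (Finset.univ : Finset (Finset (Fin m))) 𝒞) ≤ m + N :=
    Nat.sInf_le hmem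
  -- lower bound
  obtain ⟨T', hT't, hT'nc, hT'b⟩ :=
    Nat.sInf_mem (⟨m + N, hmem⟩ : Set.Nonempty {d | ∃ T : Finset (Fin m ⊕ X) → Finset (Fin m ⊕ X),
      IsPosTeacher (FreeComb (Finset.univ : Finset (Finset (Fin m))) 𝒞) T ∧
      PosNonClashing (FreeComb (Finset.univ : Finset (Finset (Fin m))) 𝒞) T ∧
      ∀ C ∈ FreeComb (Finset.univ : Finset (Finset (Fin m))) 𝒞, (T C).card ≤ d})
  set d := NCTDplus (FreeComb (Finset.univ : Finset (Finset (Fin m))) 𝒞) with hd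
  have hSmem : ∀ C ∈ 𝒞, glue (Finset.univ : Finset (Fin m)) C ∈
      FreeComb (Finset.univ : Finset (Finset (Fin m))) 𝒞 :=
    fun C hC => mem_freeComb.mpr ⟨_, mem_univ _, C, hC, rfl⟩
  -- every inl x must be in the teaching set of glue univ C
  have hall : ∀ C ∈ 𝒞, ∀ x : Fin m, Sum.inl x ∈ T' (glue Finset.univ C) := by
    intro C hC x
    by_contra hx
    have hS'mem : glue ((Finset.univ : Finset (Fin m)).erase x) C ∈
        FreeComb (Finset.univ : Finset (Finset (Fin m))) 𝒞 :=
      mem_freeComb.mpr ⟨_, mem_univ _, C, hC, rfl⟩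
    have hne : glue (Finset.univ : Finset (Fin m)) C ≠ glue (Finset.univ.erase x) C := by
      intro h
      have := (glue_inj.mp h).1
      have : x ∈ (Finset.univ : Finset (Fin m)).erase x := this ▸ mem_univ x
      exact (Finset.notMem_erase x _) this
    refine hT'nc _ (hSmem C hC) _ hS'mem hne ⟨?_, ?_⟩
    · intro y hy
      have hyS := hT't _ (hSmem C hC) hy
      rcases y with a | b
      · refine mem_glue_inl.mpr (Finset.mem_erase.mpr ⟨?_, mem_univ a⟩)
        rintro rfl; exact hx hy
      · exact mem_glue_inr.mpr (mem_glue_inr.mp hyS)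
    · exact (hT't _ hS'mem).trans
        (glue_subset_glue.mpr ⟨Finset.erase_subset _ _, subset_rfl⟩)
  -- the induced teacher on 𝒞
  set Tl : Finset X → Finset X := fun C => sumSnd (T' (glue Finset.univ C)) with hTl
  have hcard : ∀ C ∈ 𝒞, m + (Tl C).card ≤ d := by
    intro C hC
    have hsub : glue (Finset.univ : Finset (Fin m)) (Tl C) ⊆ T' (glue Finset.univ C) := by
      intro y hy
      rcases y with a | b
      · exact hall C hC a
      · exact mem_sumSnd.mp (mem_glue_inr.mp hy)
    have h1 : (glue (Finset.univ : Finset (Fin m)) (Tl C)).card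
        ≤ (T' (glue Finset.univ C)).card := Finset.card_le_card hsub
    rw [card_glue] at h1
    simp only [Finset.card_univ, Fintype.card_fin] at h1
    exact h1.trans (hT'b _ (hSmem C hC))
  have hTlmem : (d - m) ∈ {d | ∃ T : Finset X → Finset X,
      IsPosTeacher 𝒞 T ∧ PosNonClashing 𝒞 T ∧ ∀ C ∈ 𝒞, (T C).card ≤ d} := by
    refine ⟨Tl, ?_, ?_, ?_⟩
    · intro C hC
      have := sumSnd_mono (hT't _ (hSmem C hC))
      rwa [sumSnd_glue] at this
    · rintro C hC C' hC' hne ⟨h1, h2⟩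
      have hgne : glue (Finset.univ : Finset (Fin m)) C ≠ glue Finset.univ C' := by
        intro h; exact hne (glue_inj.mp h).2
      refine hT'nc _ (hSmem C hC) _ (hSmem C' hC') hgne ⟨?_, ?_⟩
      · intro y hy
        rcases y with a | b
        · exact mem_glue_inl.mpr (mem_univ a)
        · exact mem_glue_inr.mpr (h1 (mem_sumSnd.mpr hy))
      · intro y hy
        rcases y with a | b
        · exact mem_glue_inl.mpr (mem_univ a)
        · exact mem_glue_inr.mpr (h2 (mem_sumSnd.mpr hy))
    · intro C hC
      have := hcard C hC
      omega
  have hlow : N ≤ d - m := Nat.sInf_le hTlmem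
  obtain ⟨C₀, hC₀⟩ := h𝒞
  have hmd : m ≤ d := le_trans (Nat.le_add_right m _) (hcard C₀ hC₀)
  omega
end
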